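/- Area identity in diagonalizing Fourier variables. Let 𝓧 = (𝓧₁,𝓧₂): ℝ → ℝ² be continuously differentiable and 2π-periodic. For k ∈ ℤ define Ŷ₁(k) = (1/√2)(i·sgn(k)·𝓧̂₁(k) + 𝓧̂₂(k)) and Ŷ₂(k) = (1/√2)(𝓧̂₁(k) + i·sgn(k)·𝓧̂₂(k)). Then the series ∑_{k∈ℤ} |k|(|Ŷ₂(k)|² − |Ŷ₁(k)|²) converges absolutely and (1/2) ∫_{−π}^{π} (𝓧₁(θ)𝓧₂'(θ) − 𝓧₂(θ)𝓧₁'(θ)) dθ = π ∑_{k∈ℤ} |k| ( |Ŷ₂(k)|² − |Ŷ₁(k)|² ). In particular, if the curve 𝓧 encloses (signed) area π, then ∑_{k∈ℤ} |k|(|Ŷ₂(k)|² − |Ŷ₁(k)|²) = 1. -/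

import Mathlib

open Real intervalIntegral

/-- The `k`-th Fourier coefficient `f̂(k) = (1/(2π))∫_{−π}^{π} f(θ)e^{−ikθ}dθ`
of a (2π-periodic) real-valued function. -/
noncomputable def fourierCoeff' (f : ℝ → ℝ) (k : ℤ) : ℂ :=
  (1 / (2 * π) : ℂ) *
    ∫ θ in (-π)..π, (f θ : ℂ) * Complex.exp (-Complex.I * (k : ℂ) * (θ : ℂ))

/-!
The area integrand `𝓧₁𝓧₂' − 𝓧₂𝓧₁'` is a difference of two `L²` pairings, and differentiation
multiplies the `k`-th Fourier coefficient of a periodic function by `ik`, so polarized Parseval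
turns `∫ (𝓧₁𝓧₂' − 𝓧₂𝓧₁')` into `2π ∑ₖ Re(conj 𝓧̂₁(k) · ik 𝓧̂₂(k) − conj 𝓧̂₂(k) · ik 𝓧̂₁(k))`.
On each mode the change of variables to `Ŷ₁, Ŷ₂` is unitary and diagonalizes this Hermitian
form, whose `k`-th term becomes `|k| (|Ŷ₂(k)|² − |Ŷ₁(k)|²)`.
-/

open MeasureTheory Set Complex
open scoped ComplexConjugate

theorem Continuous.memLp_restrict_Ioc {E : Type*} [NormedAddCommGroup E] {f : ℝ → E}
    (hf : Continuous f) (p : ENNReal) (a b : ℝ) : MemLp f p (volume.restrict (Ioc a b)) := by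
  obtain ⟨C, hC⟩ :=
    (isCompact_Icc : IsCompact (Icc a b)).exists_bound_of_continuousOn hf.continuousOn
  refine (memLp_top_of_bound hf.aestronglyMeasurable C ?_).mono_exponent le_top
  exact (ae_restrict_iff' measurableSet_Ioc).2
    (.of_forall fun x hx => hC x (Ioc_subset_Icc_self hx))

theorem hasSum_conj_fourierCoeff_mul {T : ℝ} [Fact (0 < T)]
    (f g : Lp ℂ 2 (@AddCircle.haarAddCircle T _)) :
    HasSum (fun i => conj (fourierCoeff f i) * fourierCoeff g i)
      (∫ t, conj (f t) * g t ∂AddCircle.haarAddCircle) := by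
  have hcoeff (i : ℤ) : inner ℂ f (fourierBasis i) = conj (fourierCoeff f i) := by
    rw [← inner_conj_symm, ← fourierBasis.repr_apply_apply, fourierBasis_repr]
  simpa only [hcoeff, ← fourierBasis.repr_apply_apply, fourierBasis_repr, L2.inner_def,
    RCLike.inner_apply'] using fourierBasis.hasSum_inner_mul_inner f g

theorem hasSum_conj_fourierCoeffOn_mul {a b : ℝ} {f g : ℝ → ℂ} (hab : a < b)
    (hf : MemLp f 2 (volume.restrict (Ioc a b))) (hg : MemLp g 2 (volume.restrict (Ioc a b))) :
    HasSum (fun i => conj (fourierCoeffOn hab f i) * fourierCoeffOn hab g i)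
      ((b - a)⁻¹ • ∫ x in a..b, conj (f x) * g x) := by
  have := Fact.mk (sub_pos.2 hab)
  rw [← add_sub_cancel a b] at hf hg
  have hf' := hf.memLp_liftIoc.haarAddCircle
  have hg' := hg.memLp_liftIoc.haarAddCircle
  have hcoeff {h : ℝ → ℂ}
      (hh : MemLp (AddCircle.liftIoc (b - a) a h) 2 AddCircle.haarAddCircle) :
      fourierCoeff hh.toLp = fourierCoeffOn hab h := by
    ext n
    simp [fourierCoeff_congr_ae hh.coeFn_toLp, fourierCoeff_liftIoc_eq]
  convert hasSum_conj_fourierCoeff_mul hf'.toLp hg'.toLp using 1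
  · simp only [hcoeff]
  · nth_rw 2 [← add_sub_cancel a b]
    rw [← AddCircle.integral_liftIoc_eq_intervalIntegral, ← AddCircle.integral_haarAddCircle]
    refine integral_congr_ae ?_
    filter_upwards [hf'.coeFn_toLp, hg'.coeFn_toLp] with x hfx hgx
    rw [hfx, hgx]
    rfl

theorem hasSum_re_conj_fourierCoeffOn_mul_ofReal {a b : ℝ} {u v : ℝ → ℝ} (hab : a < b)
    (hu : MemLp u 2 (volume.restrict (Ioc a b))) (hv : MemLp v 2 (volume.restrict (Ioc a b))) :
    HasSum (fun i => (conj (fourierCoeffOn hab (fun x => (u x : ℂ)) i)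
        * fourierCoeffOn hab (fun x => (v x : ℂ)) i).re)
      ((b - a)⁻¹ * ∫ x in a..b, u x * v x) := by
  have hval : ((b - a)⁻¹ • ∫ x in a..b, conj (u x : ℂ) * v x).re
      = (b - a)⁻¹ * ∫ x in a..b, u x * v x := by
    simp only [conj_ofReal, ← ofReal_mul, integral_ofReal, smul_re, ofReal_re, smul_eq_mul]
  rw [← hval]
  exact (hasSum_conj_fourierCoeffOn_mul hab hu.ofReal hv.ofReal).mapL reCLM

theorem fourierCoeffOn_deriv_of_eq {a b : ℝ} (hab : a < b) {f f' : ℝ → ℂ}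
    (hf : ∀ x ∈ uIcc a b, HasDerivAt f (f' x) x) (hf' : IntervalIntegrable f' volume a b)
    (hfab : f a = f b) (n : ℤ) :
    fourierCoeffOn hab f' n = 2 * π * I * n / (b - a) * fourierCoeffOn hab f n := by
  have hba : (b - a : ℂ) ≠ 0 := by exact_mod_cast (sub_pos.2 hab).ne'
  rcases eq_or_ne n 0 with rfl | hn
  · simp [fourierCoeffOn_eq_integral, integral_eq_sub_of_hasDerivAt hf hf', hfab]
  · have hn' : (n : ℂ) ≠ 0 := Int.cast_ne_zero.2 hn
    rw [fourierCoeffOn_of_hasDerivAt hab hn hf hf', hfab, sub_self, mul_zero, zero_sub]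
    field_simp

theorem fourierCoeff'_eq_fourierCoeffOn (f : ℝ → ℝ) (k : ℤ) :
    fourierCoeff' f k = fourierCoeffOn (neg_lt_self pi_pos) (fun θ => (f θ : ℂ)) k := by
  rw [fourierCoeffOn_eq_integral, fourierCoeff', real_smul]
  congr 1
  · push_cast; ring
  · refine integral_congr fun θ _ => ?_
    have hπ : (π : ℂ) ≠ 0 := ofReal_ne_zero.2 pi_ne_zero
    rw [fourier_coe_apply, smul_eq_mul, mul_comm]
    push_cast
    congr 2
    field_simp
    ring

theorem fourierCoeffOn_neg_pi_pi_deriv {X : ℝ → ℝ} (hX : ContDiff ℝ 1 X)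
    (hper : X (-π) = X π) (k : ℤ) :
    fourierCoeffOn (neg_lt_self pi_pos) (fun θ => ((deriv X θ : ℝ) : ℂ)) k
      = I * k * fourierCoeffOn (neg_lt_self pi_pos) (fun θ => (X θ : ℂ)) k := by
  have hderiv :
      ∀ θ ∈ uIcc (-π) π, HasDerivAt (fun θ => (X θ : ℂ)) (deriv X θ : ℝ) θ :=
    fun θ _ => ((hX.differentiable one_ne_zero) θ).hasDerivAt.ofReal_comp
  have hint : IntervalIntegrable (fun θ => ((deriv X θ : ℝ) : ℂ)) volume (-π) π :=
    (continuous_ofReal.comp (hX.continuous_deriv le_rfl)).intervalIntegrable _ _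
  rw [fourierCoeffOn_deriv_of_eq _ hderiv hint (congrArg ofReal hper)]
  have hπ : (π : ℂ) ≠ 0 := ofReal_ne_zero.2 pi_ne_zero
  push_cast
  field_simp
  ring

theorem norm_sq_sub_norm_sq_eq_re (s : ℝ) (hs : s ^ 2 = 1) (a b : ℂ) :
    ‖(1 / √2 : ℝ) • (a + I * s * b)‖ ^ 2 - ‖(1 / √2 : ℝ) • (I * s * a + b)‖ ^ 2
      = s * (conj a * (I * b) - conj b * (I * a)).re := by
  have h2 : √2 ^ 2 = 2 := sq_sqrt zero_le_two
  simp only [Complex.sq_norm, real_smul, normSq_apply, add_re, add_im, mul_re, mul_im, I_re, I_im,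
    sub_re, conj_re, conj_im, ofReal_re, ofReal_im]
  field_simp
  rw [h2]
  linear_combination (b.re ^ 2 + b.im ^ 2 - a.re ^ 2 - a.im ^ 2) * hs

theorem abs_mul_norm_sq_sub_norm_sq_eq_re (k : ℤ) (a b : ℂ) :
    (|k| : ℝ) * (‖(1 / √2 : ℝ) • (a + I * (k.sign : ℂ) * b)‖ ^ 2
      - ‖(1 / √2 : ℝ) • (I * (k.sign : ℂ) * a + b)‖ ^ 2)
    = (conj a * (I * k * b) - conj b * (I * k * a)).re := by
  rcases eq_or_ne k 0 with rfl | hk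
  · simp
  have hs : ((k.sign : ℤ) : ℝ) ^ 2 = 1 := by
    rcases hk.lt_or_gt with h | h <;> simp [Int.sign_eq_neg_one_of_neg, Int.sign_eq_one_of_pos, h]
  calc (|k| : ℝ) * (‖(1 / √2 : ℝ) • (a + I * (k.sign : ℂ) * b)‖ ^ 2
        - ‖(1 / √2 : ℝ) • (I * (k.sign : ℂ) * a + b)‖ ^ 2)
      = (k.sign * |k| : ℤ) * (conj a * (I * b) - conj b * (I * a)).re := by
        rw [← ofReal_intCast, norm_sq_sub_norm_sq_eq_re _ hs]; push_cast; ring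
    _ = ((k : ℝ) * (conj a * (I * b) - conj b * (I * a))).re := by
        rw [Int.sign_mul_abs, re_ofReal_mul]
    _ = (conj a * (I * k * b) - conj b * (I * k * a)).re := by
        congr 1; push_cast; ring

theorem hasSum_area_fourierCoeffOn {X1 X2 : ℝ → ℝ} (hX1 : ContDiff ℝ 1 X1)
    (hX2 : ContDiff ℝ 1 X2) (hper1 : X1 (-π) = X1 π) (hper2 : X2 (-π) = X2 π) :
    HasSum (fun k : ℤ =>
        (conj (fourierCoeffOn (neg_lt_self pi_pos) (fun θ => (X1 θ : ℂ)) k)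
            * (I * k * fourierCoeffOn (neg_lt_self pi_pos) (fun θ => (X2 θ : ℂ)) k)
          - conj (fourierCoeffOn (neg_lt_self pi_pos) (fun θ => (X2 θ : ℂ)) k)
            * (I * k * fourierCoeffOn (neg_lt_self pi_pos) (fun θ => (X1 θ : ℂ)) k)).re)
      ((2 * π)⁻¹ * ∫ θ in (-π)..π, (X1 θ * deriv X2 θ - X2 θ * deriv X1 θ)) := by
  have hd1 := hX1.continuous_deriv le_rfl
  have hd2 := hX2.continuous_deriv le_rfl
  have P1 := hasSum_re_conj_fourierCoeffOn_mul_ofReal (neg_lt_self pi_pos)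
    (hX1.continuous.memLp_restrict_Ioc 2 _ _) (hd2.memLp_restrict_Ioc 2 _ _)
  have P2 := hasSum_re_conj_fourierCoeffOn_mul_ofReal (neg_lt_self pi_pos)
    (hX2.continuous.memLp_restrict_Ioc 2 _ _) (hd1.memLp_restrict_Ioc 2 _ _)
  simp only [fourierCoeffOn_neg_pi_pi_deriv hX1 hper1, fourierCoeffOn_neg_pi_pi_deriv hX2 hper2,
    sub_neg_eq_add, ← two_mul] at P1 P2
  rw [integral_sub (f := fun θ => X1 θ * deriv X2 θ) (g := fun θ => X2 θ * deriv X1 θ)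
    ((hX1.continuous.mul hd2).intervalIntegrable _ _)
    ((hX2.continuous.mul hd1).intervalIntegrable _ _), mul_sub]
  simpa only [sub_re] using P1.sub P2

/-- Area identity in diagonalizing Fourier variables: for a `C¹` `2π`-periodic
curve `𝓧 = (𝓧₁,𝓧₂)`, with `Ŷ₁(k) = (1/√2)(i·sgn(k)𝓧̂₁(k) + 𝓧̂₂(k))` and
`Ŷ₂(k) = (1/√2)(𝓧̂₁(k) + i·sgn(k)𝓧̂₂(k))`, the series
`∑_{k∈ℤ} |k|(|Ŷ₂(k)|² − |Ŷ₁(k)|²)` converges absolutely and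
`(1/2)∫_{−π}^{π}(𝓧₁𝓧₂' − 𝓧₂𝓧₁')dθ = π∑_{k∈ℤ}|k|(|Ŷ₂(k)|² − |Ŷ₁(k)|²)`; in
particular if the enclosed signed area is `π` then the sum equals `1`. -/
theorem area_identity_fourier (X1 X2 : ℝ → ℝ)
    (hX1 : ContDiff ℝ 1 X1) (hX2 : ContDiff ℝ 1 X2)
    (hper1 : ∀ θ : ℝ, X1 (θ + 2 * π) = X1 θ) (hper2 : ∀ θ : ℝ, X2 (θ + 2 * π) = X2 θ)
    (Y1 Y2 : ℤ → ℂ)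
    (hY1 : ∀ k, Y1 k = (1 / Real.sqrt 2 : ℝ) •
      (Complex.I * ((Int.sign k : ℤ) : ℂ) * fourierCoeff' X1 k + fourierCoeff' X2 k))
    (hY2 : ∀ k, Y2 k = (1 / Real.sqrt 2 : ℝ) •
      (fourierCoeff' X1 k + Complex.I * ((Int.sign k : ℤ) : ℂ) * fourierCoeff' X2 k)) :
    Summable (fun k : ℤ =>
      (|k| : ℝ) * (‖Y2 k‖ ^ 2 - ‖Y1 k‖ ^ 2)) ∧
    (1 / 2) * (∫ θ in (-π)..π, (X1 θ * deriv X2 θ - X2 θ * deriv X1 θ)) =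
      π * ∑' k : ℤ, (|k| : ℝ) * (‖Y2 k‖ ^ 2 - ‖Y1 k‖ ^ 2) ∧
    ((1 / 2) * (∫ θ in (-π)..π, (X1 θ * deriv X2 θ - X2 θ * deriv X1 θ)) = π →
      ∑' k : ℤ, (|k| : ℝ) * (‖Y2 k‖ ^ 2 - ‖Y1 k‖ ^ 2) = 1) := by
  have hends {X : ℝ → ℝ} (hper : ∀ θ : ℝ, X (θ + 2 * π) = X θ) : X (-π) = X π := by
    rw [← hper (-π)]; ring_nf
  have hsum := hasSum_area_fourierCoeffOn hX1 hX2 (hends hper1) (hends hper2)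
  simp only [← abs_mul_norm_sq_sub_norm_sq_eq_re, ← fourierCoeff'_eq_fourierCoeffOn,
    ← hY1, ← hY2] at hsum
  have harea : (1 / 2) * (∫ θ in (-π)..π, (X1 θ * deriv X2 θ - X2 θ * deriv X1 θ)) =
      π * ∑' k : ℤ, (|k| : ℝ) * (‖Y2 k‖ ^ 2 - ‖Y1 k‖ ^ 2) := by
    rw [hsum.tsum_eq]
    field_simp
  refine ⟨hsum.summable, harea, fun hπ => ?_⟩
  exact (mul_eq_left₀ pi_ne_zero).1 (harea.symm.trans hπ)
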